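/- Let n ≥ 2. Identify ℚ^{V(𝒢_n)} with vectors having coordinates c_{1,i} (at u_i^{(1)}), c_{2,i} (at u_i^{(2)}) for 1 ≤ i ≤ n, and c′ (at w). A vector c ∈ ℚ^{V(𝒢_n)} lies in the cone ℚ_{≥0}A_{𝒢_n} of nonnegative rational combinations of the edge vectors ρ(e), e ∈ E(𝒢_n), if and only if all of the following inequalities hold: (i) c_{1,i} ≥ 0 and c_{2,i} ≥ 0 for all 1 ≤ i ≤ n; (ii) Σ_{i=1}^{n}(c_{1,i} + c_{2,i}) ≥ c′; (iii) for every subset U ⊆ {1, …, n}: Σ_{i ∈ U} c_{1,i} + Σ_{i ∉ U} c_{2,i} + c′ ≥ Σ_{i ∉ U} c_{1,i} + Σ_{i ∈ U} c_{2,i}. -/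

import Mathlib

/-- Edges of the graph `𝒢ₙ`: `(i,0) = xᵢ`, `(i,1) = yᵢ`, `(i,2) = zᵢ`. -/
abbrev EdgeVar (n : ℕ) := Fin n × Fin 3

/-- Vertices of the graph `𝒢ₙ`: `none = w`, `some (i,0) = uᵢ⁽¹⁾`, `some (i,1) = uᵢ⁽²⁾`. -/
abbrev VertexVar (n : ℕ) := Option (Fin n × Fin 2)

/-- First endpoint of an edge: `xᵢ` and `yᵢ` contain `w`, `zᵢ` contains `uᵢ⁽¹⁾`. -/
def ep1 {n : ℕ} (e : EdgeVar n) : VertexVar n :=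
  if e.2 = 2 then some (e.1, 0) else none

/-- Second endpoint of an edge: `xᵢ` contains `uᵢ⁽¹⁾`, while `yᵢ` and `zᵢ` contain `uᵢ⁽²⁾`. -/
def ep2 {n : ℕ} (e : EdgeVar n) : VertexVar n :=
  if e.2 = 0 then some (e.1, 0) else some (e.1, 1)

/-- `ρ(e) = 𝐞_a + 𝐞_b ∈ ℚ^{V(𝒢ₙ)}` for an edge `e = {a, b}` of `𝒢ₙ`. -/
def rhoQ {n : ℕ} (e : EdgeVar n) : VertexVar n → ℚ :=
  fun v => (if v = ep1 e then 1 else 0) + (if v = ep2 e then 1 else 0)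

lemma eval_none (n : ℕ) (a : EdgeVar n → ℚ) :
    (∑ e : EdgeVar n, a e • rhoQ e) none = ∑ i : Fin n, (a (i,0) + a (i,1)) := by
  simp only [Finset.sum_apply, Pi.smul_apply, smul_eq_mul, rhoQ, ep1, ep2]
  rw [Fintype.sum_prod_type]
  simp [Fin.sum_univ_three]

lemma eval_some0 (n : ℕ) (a : EdgeVar n → ℚ) (i : Fin n) :
    (∑ e : EdgeVar n, a e • rhoQ e) (some (i,0)) = a (i,0) + a (i,2) := by
  simp only [Finset.sum_apply, Pi.smul_apply, smul_eq_mul, rhoQ, ep1, ep2]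
  rw [Fintype.sum_prod_type]
  simp [Fin.sum_univ_three, Prod.ext_iff, eq_comm, mul_add, Finset.sum_add_distrib, Finset.sum_ite_eq]
  ring

lemma eval_some1 (n : ℕ) (a : EdgeVar n → ℚ) (i : Fin n) :
    (∑ e : EdgeVar n, a e • rhoQ e) (some (i,1)) = a (i,1) + a (i,2) := by
  simp only [Finset.sum_apply, Pi.smul_apply, smul_eq_mul, rhoQ, ep1, ep2]
  rw [Fintype.sum_prod_type]
  simp [Fin.sum_univ_three, Prod.ext_iff, eq_comm, mul_add, Finset.sum_add_distrib, Finset.sum_ite_eq]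

/-- `c ∈ ℚ^{V(𝒢ₙ)}` lies in the cone `ℚ_{≥0}A_{𝒢ₙ}` iff (i) all coordinates at the
`uᵢ⁽ᵗ⁾` are nonnegative, (ii) `Σᵢ (c_{1,i} + c_{2,i}) ≥ c′`, and (iii) for every
`U ⊆ {1,…,n}`, `Σ_{i∈U} c_{1,i} + Σ_{i∉U} c_{2,i} + c′ ≥ Σ_{i∉U} c_{1,i} + Σ_{i∈U} c_{2,i}`. -/
theorem stmt_11 (n : ℕ) (hn : 2 ≤ n) (c : VertexVar n → ℚ) :
    (∃ a : EdgeVar n → ℚ, (∀ e, 0 ≤ a e) ∧ c = ∑ e : EdgeVar n, a e • rhoQ e) ↔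
      ((∀ (i : Fin n) (t : Fin 2), 0 ≤ c (some (i, t))) ∧
       (c none ≤ ∑ i : Fin n, (c (some (i, 0)) + c (some (i, 1)))) ∧
       (∀ U : Finset (Fin n),
         (∑ i ∈ Uᶜ, c (some (i, 0))) + (∑ i ∈ U, c (some (i, 1))) ≤
           (∑ i ∈ U, c (some (i, 0))) + (∑ i ∈ Uᶜ, c (some (i, 1))) + c none)) := by
  constructor
  · rintro ⟨a, ha, rfl⟩
    refine ⟨fun i t => ?_, ?_, fun U => ?_⟩
    · fin_cases t
      · show (0:ℚ) ≤ (∑ e : EdgeVar n, a e • rhoQ e) (some (i,0))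
        rw [eval_some0]; exact add_nonneg (ha _) (ha _)
      · show (0:ℚ) ≤ (∑ e : EdgeVar n, a e • rhoQ e) (some (i,1))
        rw [eval_some1]; exact add_nonneg (ha _) (ha _)
    · rw [eval_none]
      refine Finset.sum_le_sum fun i _ => ?_
      rw [eval_some0, eval_some1]
      have := ha (i, (2:Fin 3)); linarith
    · have key : ∀ S : Finset (Fin n),
        (∑ i ∈ S, (∑ e : EdgeVar n, a e • rhoQ e) (some (i,0)) = ∑ i ∈ S, (a (i,0) + a (i,2))) ∧
        (∑ i ∈ S, (∑ e : EdgeVar n, a e • rhoQ e) (some (i,1)) = ∑ i ∈ S, (a (i,1) + a (i,2))) := by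
        intro S
        constructor <;> refine Finset.sum_congr rfl fun i _ => ?_
        · exact eval_some0 n a i
        · exact eval_some1 n a i
      rw [(key U).1, (key U).2, (key Uᶜ).1, (key Uᶜ).2, eval_none]
      have hsplit : ∑ i : Fin n, (a (i,0) + a (i,1)) =
          (∑ i ∈ U, (a (i,0) + a (i,1))) + ∑ i ∈ Uᶜ, (a (i,0) + a (i,1)) :=
        (Finset.sum_add_sum_compl U _).symm
      have h1 : (0:ℚ) ≤ ∑ i ∈ U, a (i,(0:Fin 3)) := Finset.sum_nonneg fun i _ => ha _
      have h2 : (0:ℚ) ≤ ∑ i ∈ Uᶜ, a (i,(1:Fin 3)) := Finset.sum_nonneg fun i _ => ha _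
      simp only [Finset.sum_add_distrib] at *
      linarith
  · rintro ⟨h1, h2, h3⟩
    classical
    set d : Fin n → ℚ := fun i => c (some (i,0)) - c (some (i,1)) with hd
    set L : Fin n → ℚ := fun i => |d i| with hLdef
    set M : Fin n → ℚ := fun i => c (some (i,0)) + c (some (i,1)) with hMdef
    have hLM : ∀ i, L i ≤ M i := by
      intro i
      have h0 := h1 i 0
      have h1' := h1 i 1
      simp only [hLdef, hMdef, hd]
      rw [abs_le]
      constructor <;> linarith
    have hMsum : ∑ i, M i = ∑ i : Fin n, (c (some (i,0)) + c (some (i,1))) := rfl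
    set U0 : Finset (Fin n) := Finset.univ.filter (fun i => d i < 0) with hU0
    have hSL : ∑ i, L i ≤ c none := by
      have hU := h3 U0
      have e1 : ∑ i, L i = (∑ i ∈ U0, (c (some (i,1)) - c (some (i,0)))) +
          ∑ i ∈ U0ᶜ, (c (some (i,0)) - c (some (i,1))) := by
        rw [← Finset.sum_add_sum_compl U0 L]
        congr 1
        · refine Finset.sum_congr rfl fun i hi => ?_
          rw [hU0, Finset.mem_filter] at hi
          simp only [hLdef]
          rw [abs_of_neg hi.2, hd]
          ring
        · refine Finset.sum_congr rfl fun i hi => ?_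
          rw [Finset.mem_compl, hU0, Finset.mem_filter] at hi
          have hdi : ¬ d i < 0 := fun h => hi ⟨Finset.mem_univ i, h⟩
          simp only [hLdef]
          rw [abs_of_nonneg (not_lt.1 hdi), hd]
      rw [e1, Finset.sum_sub_distrib, Finset.sum_sub_distrib]
      linarith [hU]
    have hSM : c none ≤ ∑ i, M i := by rw [hMsum]; exact h2
    set D : ℚ := ∑ i, (M i - L i) with hDdef
    have hD0 : (0:ℚ) ≤ D := Finset.sum_nonneg fun i _ => sub_nonneg.2 (hLM i)
    have hDsum : D = ∑ i, M i - ∑ i, L i := Finset.sum_sub_distrib M L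
    set t : ℚ := if D = 0 then 0 else (c none - ∑ i, L i) / D with htdef
    have ht0 : 0 ≤ t := by
      rw [htdef]; split
      · exact le_refl 0
      · exact div_nonneg (by linarith) hD0
    have ht1 : t ≤ 1 := by
      rw [htdef]; split
      · norm_num
      · rw [div_le_one (lt_of_le_of_ne hD0 (Ne.symm (by assumption)))]
        linarith
    have htD : t * D = c none - ∑ i, L i := by
      rw [htdef]; split
      · have hD : D = 0 := by assumption
        rw [hD] at hDsum
        rw [hD]; ring_nf; linarith
      · field_simp
    set s : Fin n → ℚ := fun i => L i + t * (M i - L i) with hsdef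
    have hsL : ∀ i, L i ≤ s i := by
      intro i
      simp only [hsdef]
      nlinarith [mul_nonneg ht0 (sub_nonneg.2 (hLM i))]
    have hsM : ∀ i, s i ≤ M i := by
      intro i
      simp only [hsdef]
      linarith [mul_le_of_le_one_left (sub_nonneg.2 (hLM i)) ht1]
    have hssum : ∑ i, s i = c none := by
      simp only [hsdef]
      rw [Finset.sum_add_distrib, ← Finset.mul_sum, ← hDdef, htD]
      ring
    have hLfun : ∀ i : Fin n, L i = |d i| := fun i => rfl
    clear_value d L M D t s
    refine ⟨fun e => ![(s e.1 + d e.1)/2, (s e.1 - d e.1)/2, (M e.1 - s e.1)/2] e.2, ?_, ?_⟩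
    · rintro ⟨i, k⟩
      have hs1 := hsL i
      rw [hLfun i] at hs1
      have hs2 := hsM i
      have hs3 := neg_abs_le (d i)
      have hs4 := le_abs_self (d i)
      fin_cases k
      · show (0:ℚ) ≤ (s i + d i)/2; linarith
      · show (0:ℚ) ≤ (s i - d i)/2; linarith
      · show (0:ℚ) ≤ (M i - s i)/2; linarith
    · funext v
      rcases v with _ | ⟨i, ti⟩
      · rw [eval_none, ← hssum]
        refine Finset.sum_congr rfl fun i _ => ?_
        show s i = (s i + d i)/2 + (s i - d i)/2
        ring
      · fin_cases ti
        · show c (some (i,0)) = (∑ e : EdgeVar n, _ • rhoQ e) (some (i,0))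
          rw [eval_some0]
          show c (some (i,0)) = (s i + d i)/2 + (M i - s i)/2
          simp only [hMdef, hd]
          ring
        · show c (some (i,1)) = (∑ e : EdgeVar n, _ • rhoQ e) (some (i,1))
          rw [eval_some1]
          show c (some (i,1)) = (s i - d i)/2 + (M i - s i)/2
          simp only [hMdef, hd]
          ring
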